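/- Let x = (x_1,…,x_R) be a vector of distinct real numbers, c = (c_1,…,c_R) a vector of real numbers, B = B(x,c), and let u ∈ ℂ^R be an eigenvector of B with eigenvalue iμ, μ ∈ ℝ. Then |Σ_{r=1}^R c_r u_r|² = Σ_{r=1}^R |c_r u_r|². -/

import Mathlib

/-!
With `X = diag(x)`, the entries of `B` satisfy `x_m b_{mn} - b_{mn} x_n = c_m c_n` off the
diagonal, so `XB - BX = c cᵀ - diag(c²)`. As `B` is real antisymmetric and `iμ` is purely
imaginary, `ū` is a left eigenvector of `B` for the same eigenvalue `iμ`, and then the quadratic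
form `ū ⬝ [X, B] u` of any commutator vanishes. For `[X, B] = c cᵀ - diag(c²)` this form is
`|Σ c_r u_r|² - Σ |c_r u_r|²`.
-/

open Matrix

/-- The generalized weighted Hilbert matrix `B(x,c)` with entries
`b_{m,n} = c_m c_n / (x_m - x_n)` for `m ≠ n` and `0` on the diagonal. -/
noncomputable def Bmat {R : ℕ} (x c : Fin R → ℝ) : Matrix (Fin R) (Fin R) ℝ :=
  Matrix.of fun m n => if m = n then 0 else c m * c n / (x m - x n)

namespace Matrix

variable {n α : Type*} [Fintype n] [CommRing α]

theorem dotProduct_commutator_mulVec_eq_zero (X : Matrix n n α) {A : Matrix n n α} {u v : n → α}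
    {μ : α} (hu : A *ᵥ u = μ • u) (hv : v ᵥ* A = μ • v) :
    v ⬝ᵥ (X * A - A * X) *ᵥ u = 0 := by
  rw [sub_mulVec, ← mulVec_mulVec, ← mulVec_mulVec, dotProduct_sub, hu, mulVec_smul,
    dotProduct_mulVec v A, hv, dotProduct_smul, smul_dotProduct, sub_self]

variable [StarRing α]

theorem vecMul_star_eq_of_conjTranspose_eq_neg {A : Matrix n n α} (hA : Aᴴ = -A) {u : n → α}
    {μ : α} (hu : A *ᵥ u = μ • u) (hμ : star μ = -μ) : star u ᵥ* A = μ • star u := by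
  have := star_mulVec A u
  rw [hu, hA, vecMul_neg, star_smul, hμ, neg_smul, neg_inj] at this
  exact this.symm

theorem star_dotProduct_vecMulVec_self_mulVec {w : n → α} (hw : star w = w) (u : n → α) :
    star u ⬝ᵥ vecMulVec w w *ᵥ u = star (w ⬝ᵥ u) * (w ⬝ᵥ u) := by
  rw [dotProduct_mulVec, vecMul_vecMulVec, smul_dotProduct, smul_eq_mul, star_dotProduct, hw]

theorem star_dotProduct_diagonal_mul_self_mulVec [DecidableEq n] {w : n → α} (hw : star w = w)
    (u : n → α) :
    star u ⬝ᵥ diagonal (w * w) *ᵥ u = ∑ r, star (w r * u r) * (w r * u r) := by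
  simp only [dotProduct, mulVec_diagonal, Pi.mul_apply, Pi.star_apply, star_mul']
  refine Finset.sum_congr rfl fun r _ => ?_
  rw [show star (w r) = w r from congrFun hw r]
  ring

end Matrix

theorem Bmat_transpose {R : ℕ} (x c : Fin R → ℝ) : (Bmat x c)ᵀ = -Bmat x c := by
  ext m n
  simp only [Bmat, transpose_apply, Matrix.neg_apply, of_apply]
  rcases eq_or_ne m n with rfl | hmn
  · simp
  · rw [if_neg hmn.symm, if_neg hmn, ← neg_sub, div_neg, mul_comm]

theorem diagonal_mul_Bmat_sub_Bmat_mul_diagonal {R : ℕ} {x : Fin R → ℝ}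
    (hx : Function.Injective x) (c : Fin R → ℝ) :
    diagonal x * Bmat x c - Bmat x c * diagonal x = vecMulVec c c - diagonal (c * c) := by
  ext m n
  simp only [Matrix.sub_apply, diagonal_mul, mul_diagonal, Bmat, of_apply, vecMulVec_apply,
    diagonal_apply, Pi.mul_apply]
  split_ifs with hmn
  · subst hmn; ring
  · have : x m - x n ≠ 0 := sub_ne_zero.mpr (hx.ne hmn)
    field_simp
    ring

theorem eigenvector_weighted_sum_identity_general {R : ℕ} (x c : Fin R → ℝ)
    (hx : Function.Injective x) (μ : ℝ) (u : Fin R → ℂ)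
    (h : ((Bmat x c).map (fun r => (r : ℂ))) *ᵥ u = (Complex.I * (μ : ℂ)) • u) :
    ‖∑ r, (c r : ℂ) * u r‖ ^ 2 =
      ∑ r, ‖(c r : ℂ) * u r‖ ^ 2 := by
  set B := (Bmat x c).map (fun r => (r : ℂ))
  set w : Fin R → ℂ := fun r => c r
  have hw : star w = w := funext fun r => Complex.conj_ofReal _
  have hskew : Bᴴ = -B := by
    rw [← conjTranspose_map _ (fun r => (Complex.conj_ofReal r).symm),
      conjTranspose_eq_transpose_of_trivial, Bmat_transpose]
    exact Matrix.map_neg _ Complex.ofReal_neg _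
  have hstar_left := vecMul_star_eq_of_conjTranspose_eq_neg hskew h (by simp [Complex.conj_ofReal])
  have hcomm : diagonal (fun r => (x r : ℂ)) * B - B * diagonal (fun r => (x r : ℂ)) =
      vecMulVec w w - diagonal (w * w) := by
    have := congrArg (·.map Complex.ofRealHom) (diagonal_mul_Bmat_sub_Bmat_mul_diagonal hx c)
    ext m n
    simpa [B, w, Matrix.map_sub, Matrix.map_mul, vecMulVec_apply, diagonal_apply, apply_ite]
      using congrFun₂ this m n
  have hform := dotProduct_commutator_mulVec_eq_zero (diagonal fun r => (x r : ℂ)) h hstar_left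
  rw [hcomm, sub_mulVec, dotProduct_sub, star_dotProduct_vecMulVec_self_mulVec hw,
    star_dotProduct_diagonal_mul_self_mulVec hw, sub_eq_zero] at hform
  simp only [Complex.star_def, Complex.conj_mul'] at hform
  exact_mod_cast hform

/-- If `u` is an eigenvector of `B(x,c)` for the eigenvalue `iμ`, then
`|Σ_r c_r u_r|² = Σ_r |c_r u_r|²`. -/
theorem eigenvector_weighted_sum_identity {R : ℕ} (x c : Fin R → ℝ)
    (hx : Function.Injective x) (μ : ℝ) (u : Fin R → ℂ) (hu : u ≠ 0)
    (h : ((Bmat x c).map (fun r => (r : ℂ))) *ᵥ u = (Complex.I * (μ : ℂ)) • u) :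
    ‖∑ r, (c r : ℂ) * u r‖ ^ 2 =
      ∑ r, ‖(c r : ℂ) * u r‖ ^ 2 :=
  eigenvector_weighted_sum_identity_general x c hx μ u h
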